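/- A directed acyclic graph is Markov equivalent to some bidirected graph if and only if it contains no unshielded non-collision V-configuration. -/

import Mathlib

/-- A loopless mixed graph with three kinds of edges: lines (undirected),
arrows (directed, `arrow i j` means `i → j`), and arcs (bidirected). -/
structure MixedGraph (V : Type*) where
  line : V → V → Prop
  arrow : V → V → Prop
  arc : V → V → Prop
  line_symm : ∀ i j, line i j → line j i
  arc_symm : ∀ i j, arc i j → arc j i
  line_irrefl : ∀ i, ¬ line i i
  arrow_irrefl : ∀ i, ¬ arrow i i
  arc_irrefl : ∀ i, ¬ arc i i

namespace MixedGraph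

variable {V : Type*}

/-- `i` and `j` are adjacent (joined by some edge). -/
def adj (G : MixedGraph V) (i j : V) : Prop :=
  G.line i j ∨ G.arrow i j ∨ G.arrow j i ∨ G.arc i j

/-- There is an edge between `i` and `j` with an arrowhead pointing at `j`. -/
def headAt (G : MixedGraph V) (i j : V) : Prop :=
  G.arrow i j ∨ G.arc i j

/-- `j` is a collider on the V-configuration `⟨i, j, k⟩`. -/
def collider (G : MixedGraph V) (i j k : V) : Prop :=
  G.headAt i j ∧ G.headAt k j

/-- `i` is an ancestor of `j` (a direction-preserving path of arrows from `i` to `j`). -/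
def anc (G : MixedGraph V) (i j : V) : Prop :=
  Relation.ReflTransGen G.arrow i j

/-- A path: a list of pairwise distinct nodes, consecutive ones adjacent. -/
def isPath (G : MixedGraph V) (p : List V) : Prop :=
  p.Nodup ∧ List.Chain' G.adj p

/-- Inner-node condition for an `m`-connecting path given `C`:
every collider inner node is in `C` or an ancestor of a node of `C`,
every non-collider inner node is outside `C`. -/
def innerOK (G : MixedGraph V) (C : Set V) : List V → Prop
  | a :: b :: c :: rest =>
      ((G.collider a b c → b ∈ C ∨ ∃ x ∈ C, G.anc b x) ∧
        (¬ G.collider a b c → b ∉ C)) ∧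
      innerOK G C (b :: c :: rest)
  | _ => True

/-- `p` is an `m`-connecting path between `i` and `j` given `C`. -/
def mConnecting (G : MixedGraph V) (C : Set V) (i j : V) (p : List V) : Prop :=
  G.isPath p ∧ 2 ≤ p.length ∧ p.head? = some i ∧ p.getLast? = some j ∧
    G.innerOK C p

/-- `A` is `m`-separated from `B` given `C`. -/
def mSep (G : MixedGraph V) (A B C : Set V) : Prop :=
  ¬ ∃ (i j : V) (p : List V), i ∈ A ∧ j ∈ B ∧ G.mConnecting C i j p

/-- Two mixed graphs on the same node set are Markov equivalent if they induce
exactly the same `m`-separation statements among disjoint sets. -/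
def markovEquiv (G₁ G₂ : MixedGraph V) : Prop :=
  ∀ A B C : Set V, Disjoint A B → Disjoint A C → Disjoint B C →
    (G₁.mSep A B C ↔ G₂.mSep A B C)

/-- An undirected graph: only line edges. -/
def isUG (G : MixedGraph V) : Prop :=
  (∀ i j, ¬ G.arrow i j) ∧ (∀ i j, ¬ G.arc i j)

/-- A bidirected graph: only arc edges. -/
def isBG (G : MixedGraph V) : Prop :=
  (∀ i j, ¬ G.arrow i j) ∧ (∀ i j, ¬ G.line i j)

/-- A directed acyclic graph: only arrows, and no directed cycle. -/
def isDAG (G : MixedGraph V) : Prop :=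
  (∀ i j, ¬ G.line i j) ∧ (∀ i j, ¬ G.arc i j) ∧ ∀ i, ¬ Relation.TransGen G.arrow i i

/-- An ancestral graph: no node is an ancestor of one of its parents or spouses,
and no arrowhead points at a node having a neighbour. -/
def isAncestral (G : MixedGraph V) : Prop :=
  (∀ i j, (G.arrow j i ∨ G.arc j i) → ¬ G.anc i j) ∧
  (∀ i j k, G.line i j → ¬ G.headAt k i)

/-- Maximality: every pair of distinct non-adjacent nodes can be `m`-separated. -/
def isMaximal (G : MixedGraph V) : Prop :=
  ∀ i j, i ≠ j → ¬ G.adj i j → ∃ C : Set V, i ∉ C ∧ j ∉ C ∧ G.mSep {i} {j} C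

/-- A maximal ancestral graph. -/
def isMAG (G : MixedGraph V) : Prop :=
  G.isAncestral ∧ G.isMaximal

/-- Two graphs have the same skeleton. -/
def sameSkeleton (G₁ G₂ : MixedGraph V) : Prop :=
  ∀ i j, G₁.adj i j ↔ G₂.adj i j

/-- An unshielded collider V-configuration `⟨i, j, k⟩`. -/
def unshieldedCollider (G : MixedGraph V) (i j k : V) : Prop :=
  G.collider i j k ∧ i ≠ k ∧ ¬ G.adj i k

end MixedGraph

namespace MixedGraph
variable {V : Type*}

/-- An unshielded non-collision V-configuration: a path `i, j, k` with `i, k`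
non-adjacent which is not of the form `i → j ← k`. -/
def unshieldedNonCollision (G : MixedGraph V) (i j k : V) : Prop :=
  G.adj i j ∧ G.adj j k ∧ i ≠ k ∧ ¬ G.adj i k ∧ ¬ (G.arrow i j ∧ G.arrow k j)

end MixedGraph

/-!
If `G` has no unshielded non-collision, then `a → b → c` forces `a → c`, so every proper
ancestor is a parent, and an induction along an `m`-connecting path shows that `i ≠ k` are
`m`-connected given `C` exactly when they are adjacent or have a common child in `C`. The
same holds in the bidirected graph on the skeleton of `G`, so the two graphs are Markov
equivalent. Conversely, an unshielded non-collision `i — j — k` `m`-connects `i` and `k`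
given `∅`, which in a bidirected graph forces an arc `i ↔ k`; but in the DAG the
non-adjacent `i` and `k` are `m`-separated by their other ancestors, while no set
`m`-separates the endpoints of an arc.
-/

theorem List.Nodup.ne_of_getLast?_eq {α : Type*} {a b k : α} {l : List α}
    (hnd : (a :: b :: l).Nodup) (hlast : (a :: b :: l).getLast? = some k) : a ≠ k := by
  rintro rfl
  rw [List.getLast?_cons_cons] at hlast
  exact (List.nodup_cons.mp hnd).1 (List.mem_of_getLast? hlast)

namespace MixedGraph

variable {V : Type*} {G : MixedGraph V} {C : Set V} {i j k a b c u v : V}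

theorem adj_symm (h : G.adj i j) : G.adj j i := by
  rcases h with h | h | h | h
  · exact Or.inl (G.line_symm _ _ h)
  · exact Or.inr (Or.inr (Or.inl h))
  · exact Or.inr (Or.inl h)
  · exact Or.inr (Or.inr (Or.inr (G.arc_symm _ _ h)))

theorem ne_of_adj (h : G.adj i j) : i ≠ j := by
  rintro rfl
  rcases h with h | h | h | h
  exacts [G.line_irrefl _ h, G.arrow_irrefl _ h, G.arrow_irrefl _ h, G.arc_irrefl _ h]

theorem adj_of_arrow (h : G.arrow i j) : G.adj i j := Or.inr (Or.inl h)

theorem innerOK.of_cons {x : V} {p : List V} (h : G.innerOK C (x :: p)) : G.innerOK C p :=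
  match p, h with
  | _ :: _ :: _, h => h.2
  | [_], _ | [], _ => trivial

theorem innerOK.of_infix {p : List V} (h : G.innerOK C p) (habc : [a, b, c] <:+: p) :
    (G.collider a b c → b ∈ C ∨ ∃ x ∈ C, G.anc b x) ∧
      (¬ G.collider a b c → b ∉ C) := by
  induction p with
  | nil => simp at habc
  | cons x p ih =>
    rcases List.infix_cons_iff.mp habc with ⟨rest, hrest⟩ | hinf
    · obtain ⟨rfl, rfl⟩ : x = a ∧ p = b :: c :: rest := by simpa using hrest.symm
      exact h.1
    · exact ih h.of_cons hinf

theorem mConnecting_pair (h : G.adj i k) : G.mConnecting C i k [i, k] :=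
  ⟨⟨by simpa using ne_of_adj h, List.isChain_pair.mpr h⟩, le_rfl, rfl, rfl, trivial⟩

theorem mConnecting_triple (hij : G.adj i j) (hjk : G.adj j k) (hik : i ≠ k)
    (hj : (G.collider i j k → j ∈ C ∨ ∃ x ∈ C, G.anc j x) ∧
      (¬ G.collider i j k → j ∉ C)) :
    G.mConnecting C i k [i, j, k] :=
  ⟨⟨by simp [ne_of_adj hij, ne_of_adj hjk, hik],
      List.isChain_cons_cons.mpr ⟨hij, List.isChain_pair.mpr hjk⟩⟩,
    by simp, rfl, rfl, hj, trivial⟩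

theorem markovEquiv_of_mConnecting_iff {H : MixedGraph V}
    (h : ∀ C i k, i ≠ k → ((∃ p, G.mConnecting C i k p) ↔ ∃ p, H.mConnecting C i k p)) :
    G.markovEquiv H := by
  intro A B C hAB _ _
  refine not_congr ⟨?_, ?_⟩ <;> rintro ⟨i, k, p, hi, hk, hp⟩
  · obtain ⟨q, hq⟩ := (h C i k (hAB.ne_of_mem hi hk)).mp ⟨p, hp⟩
    exact ⟨i, k, q, hi, hk, hq⟩
  · obtain ⟨q, hq⟩ := (h C i k (hAB.ne_of_mem hi hk)).mpr ⟨p, hp⟩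
    exact ⟨i, k, q, hi, hk, hq⟩

namespace isDAG

variable (hG : G.isDAG)
include hG

theorem adj_iff : G.adj i j ↔ G.arrow i j ∨ G.arrow j i := by
  have := hG.1 i j
  have := hG.2.1 i j
  unfold adj
  tauto

theorem collider_iff : G.collider a b c ↔ G.arrow a b ∧ G.arrow c b := by
  have := hG.2.1 a b
  have := hG.2.1 c b
  unfold collider headAt
  tauto

theorem not_anc_of_arrow (h : G.arrow a b) : ¬ G.anc b a :=
  fun h' => hG.2.2 a (Relation.TransGen.head' h h')

theorem not_arrow_of_arrow (h : G.arrow a b) : ¬ G.arrow b a :=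
  fun h' => hG.not_anc_of_arrow h (Relation.ReflTransGen.single h')

theorem anc_of_arrow_of_innerOK {k : V} :
    ∀ (t : List V) (b c : V), List.IsChain G.adj (b :: c :: t) → G.innerOK C (b :: c :: t) →
      (b :: c :: t).getLast? = some k → G.arrow b c → (∃ x ∈ C, G.anc b x) ∨ G.anc b k
  | [], b, c, _, _, hlast, hbc => by
    obtain rfl : c = k := by simpa using hlast
    exact Or.inr (Relation.ReflTransGen.single hbc)
  | d :: t, b, c, hch, hok, hlast, hbc => by
    rcases hG.adj_iff.mp (List.isChain_cons_cons.mp hch.tail).1 with hcd | hdc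
    · rw [List.getLast?_cons_cons] at hlast
      rcases anc_of_arrow_of_innerOK t c d hch.tail hok.2 hlast hcd with
        ⟨x, hx, hcx⟩ | hck
      · exact Or.inl ⟨x, hx, hcx.head hbc⟩
      · exact Or.inr (hck.head hbc)
    · rcases hok.1.1 (hG.collider_iff.mpr ⟨hbc, hdc⟩) with hc | ⟨x, hx, hcx⟩
      · exact Or.inl ⟨c, hc, Relation.ReflTransGen.single hbc⟩
      · exact Or.inl ⟨x, hx, hcx.head hbc⟩

theorem anc_of_innerOK_cons {t : List V} {w : V} (hch : List.IsChain G.adj (a :: v :: w :: t))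
    (hok : G.innerOK C (a :: v :: w :: t)) (hlast : (v :: w :: t).getLast? = some k) :
    (∃ x ∈ C, G.anc v x) ∨ G.anc v a ∨ G.anc v k := by
  by_cases hcol : G.collider a v w
  · rcases hok.1.1 hcol with hv | h
    exacts [Or.inl ⟨v, hv, .refl⟩, Or.inl h]
  rcases hG.adj_iff.mp (List.isChain_cons_cons.mp hch).1 with hav | hva
  · have hvw : G.arrow v w := (hG.adj_iff.mp (List.isChain_cons_cons.mp hch.tail).1).resolve_right
      fun hwv => hcol (hG.collider_iff.mpr ⟨hav, hwv⟩)
    exact (hG.anc_of_arrow_of_innerOK t v w hch.tail hok.2 hlast hvw).imp_right Or.inr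
  · exact Or.inr (Or.inl (.single hva))

theorem mSep_ancestors (hik : i ≠ k) (hadj : ¬ G.adj i k) :
    G.mSep {i} {k} {v | v ≠ i ∧ v ≠ k ∧ (G.anc v i ∨ G.anc v k)} := by
  rintro ⟨_, _, p, hi, hk, ⟨hnd, hch⟩, hlen, hhead, hlast, hok⟩
  rw [Set.mem_singleton_iff.mp hi] at hhead
  rw [Set.mem_singleton_iff.mp hk] at hlast
  match p, hnd, hch, hlen, hhead, hlast, hok with
  | [_, _], _, hch, _, hhead, hlast, _ =>
    obtain ⟨rfl, rfl⟩ := And.intro (Option.some_injective _ hhead).symm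
      (Option.some_injective _ hlast).symm
    exact hadj (List.isChain_pair.mp hch)
  | i' :: v :: w :: t, hnd, hch, _, hhead, hlast, hok =>
    obtain rfl : i = i' := (Option.some_injective _ hhead).symm
    rw [List.getLast?_cons_cons] at hlast
    have hvi : v ≠ i := fun h => (List.nodup_cons.mp hnd).1 (h ▸ List.mem_cons_self)
    have hvk : v ≠ k := hnd.of_cons.ne_of_getLast?_eq hlast
    have hvW : G.anc v i ∨ G.anc v k := by
      rcases hG.anc_of_innerOK_cons hch hok hlast with ⟨x, hx, hvx⟩ | h
      exacts [hx.2.2.imp hvx.trans hvx.trans, h]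
    have hcol : G.collider i v w := by_contra fun h => hok.1.2 h ⟨hvi, hvk, hvW⟩
    obtain ⟨hiv, hwv⟩ := hG.collider_iff.mp hcol
    have hvk : G.anc v k := hvW.resolve_left (hG.not_anc_of_arrow hiv)
    match t, hnd, hlast, hok with
    | [], _, hlast, _ =>
      obtain rfl : w = k := by simpa using hlast
      exact hG.not_anc_of_arrow hwv hvk
    | x :: t, hnd, hlast, hok =>
      have hwi : w ≠ i := fun h => (List.nodup_cons.mp hnd).1 (h ▸ by simp)
      have hwk : w ≠ k := hnd.of_cons.of_cons.ne_of_getLast?_eq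
        (by rwa [List.getLast?_cons_cons] at hlast)
      have hcol' : G.collider v w x :=
        by_contra fun h => hok.2.1.2 h ⟨hwi, hwk, Or.inr (hvk.head hwv)⟩
      exact hG.not_arrow_of_arrow hwv (hG.collider_iff.mp hcol').1

end isDAG

def coupled (G : MixedGraph V) (C : Set V) (i k : V) : Prop :=
  k = i ∨ G.adj i k ∨ ∃ b ∈ C, G.arrow i b ∧ G.arrow k b

def relay (G : MixedGraph V) (C : Set V) (i u : V) : Prop :=
  u = i ∨ (u ∈ C ∧ G.coupled C i u)

/-- The invariant carried along an `m`-connecting path from `i`, edge by edge. -/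
def edgeReached (G : MixedGraph V) (C : Set V) (i a b : V) : Prop :=
  ∃ u, G.relay C i u ∧ (u = b ∨ G.arrow b u ∨ (G.arrow a b ∧ G.adj u b))

theorem relay.coupled (h : G.relay C i u) : G.coupled C i u :=
  h.elim Or.inl And.right

section NoUnshieldedNonCollision

variable (hG : G.isDAG) (hH : ¬ ∃ i j k, G.unshieldedNonCollision i j k)
include hG hH

theorem adj_of_adj_of_arrow (hub : G.adj u b) (hbc : G.arrow b c) (huc : u ≠ c) :
    G.adj u c :=
  by_contra fun h => hH ⟨u, b, c, hub, adj_of_arrow hbc, huc, h,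
    fun h' => hG.not_arrow_of_arrow hbc h'.2⟩

theorem arrow_trans (hab : G.arrow a b) (hbc : G.arrow b c) : G.arrow a c := by
  have hac : a ≠ c := by
    rintro rfl
    exact hG.not_arrow_of_arrow hab hbc
  refine (hG.adj_iff.mp (adj_of_adj_of_arrow hG hH (adj_of_arrow hab) hbc hac)).resolve_right
    fun hca => ?_
  exact hG.2.2 a (.tail (.tail (.single hab) hbc) hca)

theorem arrow_of_anc (h : G.anc a b) (hab : a ≠ b) : G.arrow a b := by
  induction h with
  | refl => exact absurd rfl hab
  | @tail c d _ hcd ih =>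
    by_cases hac : a = c
    · exact hac ▸ hcd
    · exact arrow_trans hG hH (ih hac) hcd

theorem coupled_of_relay_of_adj (hu : G.relay C i u) (huv : G.adj u v) : G.coupled C i v := by
  obtain rfl | ⟨huC, rfl | hiu | ⟨b, hbC, hib, hub⟩⟩ := hu
  · exact Or.inr (Or.inl huv)
  · exact Or.inr (Or.inl huv)
  · by_cases hvi : v = i
    · exact Or.inl hvi
    by_cases hiv : G.adj i v
    · exact Or.inr (Or.inl hiv)
    have hcol : G.arrow i u ∧ G.arrow v u :=
      by_contra fun h => hH ⟨i, u, v, hiu, huv, Ne.symm hvi, hiv, h⟩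
    exact Or.inr (Or.inr ⟨u, huC, hcol⟩)
  · by_cases hvb : v = b
    · exact Or.inr (Or.inl (hvb ▸ adj_of_arrow hib))
    rcases hG.adj_iff.mp (adj_of_adj_of_arrow hG hH (adj_symm huv) hub hvb) with hvb | hbv
    · exact Or.inr (Or.inr ⟨b, hbC, hib, hvb⟩)
    · exact Or.inr (Or.inl (adj_of_arrow (arrow_trans hG hH hib hbv)))

theorem edgeReached.step (hab : G.edgeReached C i a b) (hbc : G.adj b c)
    (hcol : G.collider a b c → b ∈ C ∨ ∃ x ∈ C, G.anc b x) : G.edgeReached C i b c := by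
  obtain ⟨u, hu, hub⟩ := hab
  rcases hG.adj_iff.mp hbc with hbc | hcb
  · refine ⟨u, hu, ?_⟩
    by_cases huc : u = c
    · exact Or.inl huc
    refine Or.inr (Or.inr ⟨hbc, ?_⟩)
    rcases hub with rfl | hbu | ⟨-, hub⟩
    · exact adj_of_arrow hbc
    · exact adj_of_adj_of_arrow hG hH (adj_symm (adj_of_arrow hbu)) hbc huc
    · exact adj_of_adj_of_arrow hG hH hub hbc huc
  rcases hub with rfl | hbu | ⟨hab, hub⟩
  · exact ⟨u, hu, Or.inr (Or.inl hcb)⟩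
  · exact ⟨u, hu, Or.inr (Or.inl (arrow_trans hG hH hcb hbu))⟩
  obtain ⟨x, hxC, hbx⟩ : ∃ x ∈ C, G.anc b x :=
    (hcol (hG.collider_iff.mpr ⟨hab, hcb⟩)).elim (fun hb => ⟨b, hb, .refl⟩) id
  have hx : G.relay C i x := by
    by_cases hux : u = x
    · exact hux ▸ hu
    refine Or.inr ⟨hxC, coupled_of_relay_of_adj hG hH hu ?_⟩
    by_cases hbx' : b = x
    · exact hbx' ▸ hub
    exact adj_of_adj_of_arrow hG hH hub (arrow_of_anc hG hH hbx hbx') hux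
  have hcx : c ≠ x := by
    rintro rfl
    exact hG.not_anc_of_arrow hcb hbx
  exact ⟨x, hx, Or.inr (Or.inl (arrow_of_anc hG hH (hbx.head hcb) hcx))⟩

theorem coupled_of_edgeReached : ∀ (l : List V) (a b : V), List.IsChain G.adj (a :: b :: l) →
    (∀ x y z, [x, y, z] <:+: a :: b :: l →
      G.collider x y z → y ∈ C ∨ ∃ w ∈ C, G.anc y w) →
    (a :: b :: l).getLast? = some k → G.edgeReached C i a b → G.coupled C i k
  | [], _, b, _, _, hlast, ⟨u, hu, hub⟩ => by
    obtain rfl : b = k := by simpa using hlast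
    rcases hub with rfl | hbu | ⟨-, hub⟩
    · exact hu.coupled
    · exact coupled_of_relay_of_adj hG hH hu (adj_symm (adj_of_arrow hbu))
    · exact coupled_of_relay_of_adj hG hH hu hub
  | c :: l, a, b, hch, hcol, hlast, hab => by
    rw [List.getLast?_cons_cons] at hlast
    refine coupled_of_edgeReached l b c hch.tail
      (fun x y z h => hcol x y z (h.trans (List.suffix_cons a _).isInfix)) hlast ?_
    exact hab.step hG hH (List.isChain_cons_cons.mp hch.tail).1 (hcol a b c ⟨[], l, rfl⟩)

theorem coupled_of_isChain {p : List V} (hch : List.IsChain G.adj p) (hlen : 2 ≤ p.length)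
    (hhead : p.head? = some i) (hlast : p.getLast? = some k)
    (hcol : ∀ x y z, [x, y, z] <:+: p →
      G.collider x y z → y ∈ C ∨ ∃ w ∈ C, G.anc y w) :
    G.coupled C i k := by
  match p, hch, hlen, hhead, hlast, hcol with
  | i' :: v :: l, hch, _, hhead, hlast, hcol =>
    obtain rfl : i = i' := (Option.some_injective _ hhead).symm
    refine coupled_of_edgeReached hG hH l i v hch hcol hlast ⟨i, Or.inl rfl, ?_⟩
    rcases hG.adj_iff.mp (List.isChain_cons_cons.mp hch).1 with hiv | hvi
    exacts [Or.inr (Or.inr ⟨hiv, adj_of_arrow hiv⟩), Or.inr (Or.inl hvi)]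

theorem exists_mConnecting_iff_coupled (hik : i ≠ k) :
    (∃ p, G.mConnecting C i k p) ↔ G.coupled C i k := by
  refine ⟨fun ⟨p, ⟨_, hch⟩, hlen, hhead, hlast, hok⟩ =>
    coupled_of_isChain hG hH hch hlen hhead hlast fun _ _ _ h => (hok.of_infix h).1, ?_⟩
  rintro (rfl | hadj | ⟨b, hb, hib, hkb⟩)
  · exact absurd rfl hik
  · exact ⟨_, mConnecting_pair hadj⟩
  · refine ⟨_, mConnecting_triple (adj_of_arrow hib) (adj_symm (adj_of_arrow hkb)) hik
      ⟨fun _ => Or.inl hb, fun h => absurd (hG.collider_iff.mpr ⟨hib, hkb⟩) h⟩⟩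

end NoUnshieldedNonCollision

def skeletonBG (G : MixedGraph V) : MixedGraph V where
  line _ _ := False
  arrow _ _ := False
  arc := G.adj
  line_symm _ _ := id
  arc_symm _ _ := adj_symm
  line_irrefl _ := id
  arrow_irrefl _ := id
  arc_irrefl _ h := ne_of_adj h rfl

theorem skeletonBG_isBG : G.skeletonBG.isBG :=
  ⟨fun _ _ => id, fun _ _ => id⟩

theorem skeletonBG_adj : G.skeletonBG.adj i j ↔ G.adj i j := by
  simp [adj, skeletonBG]

theorem skeletonBG_innerOK_of_infix {p : List V} (hch : List.IsChain G.adj p)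
    (hok : G.skeletonBG.innerOK C p) (h : [a, b, c] <:+: p) : b ∈ C := by
  have hch : List.IsChain G.adj [a, b, c] := hch.infix h
  have hcol : G.skeletonBG.collider a b c :=
    ⟨Or.inr (List.isChain_cons_cons.mp hch).1,
      Or.inr (adj_symm (List.isChain_pair.mp hch.tail))⟩
  obtain hb | ⟨x, hx, hbx⟩ := (hok.of_infix h).1 hcol
  · exact hb
  · rwa [(Relation.reflTransGen_iff_eq fun _ h => h).mp hbx] at hx

theorem exists_skeletonBG_mConnecting_iff_coupled (hG : G.isDAG)
    (hH : ¬ ∃ i j k, G.unshieldedNonCollision i j k) (hik : i ≠ k) :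
    (∃ p, G.skeletonBG.mConnecting C i k p) ↔ G.coupled C i k := by
  refine ⟨fun ⟨p, ⟨_, hch⟩, hlen, hhead, hlast, hok⟩ => ?_, ?_⟩
  · have hch : List.IsChain G.adj p := hch.imp fun _ _ => skeletonBG_adj.mp
    exact coupled_of_isChain hG hH hch hlen hhead hlast
      fun _ _ _ h _ => Or.inl (skeletonBG_innerOK_of_infix hch hok h)
  rintro (rfl | hadj | ⟨b, hb, hib, hkb⟩)
  · exact absurd rfl hik
  · exact ⟨_, mConnecting_pair (skeletonBG_adj.mpr hadj)⟩
  · have hcol : G.skeletonBG.collider i b k :=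
      ⟨Or.inr (adj_of_arrow hib), Or.inr (adj_of_arrow hkb)⟩
    exact ⟨_, mConnecting_triple (skeletonBG_adj.mpr (adj_of_arrow hib))
      (skeletonBG_adj.mpr (adj_symm (adj_of_arrow hkb))) hik
      ⟨fun _ => Or.inl hb, absurd hcol⟩⟩

theorem markovEquiv_skeletonBG (hG : G.isDAG) (hH : ¬ ∃ i j k, G.unshieldedNonCollision i j k) :
    G.markovEquiv G.skeletonBG :=
  markovEquiv_of_mConnecting_iff fun _ _ _ hik =>
    (exists_mConnecting_iff_coupled hG hH hik).trans
      (exists_skeletonBG_mConnecting_iff_coupled hG hH hik).symm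

theorem isBG.arc_of_adj {B : MixedGraph V} (hB : B.isBG) (h : B.adj i j) : B.arc i j := by
  rcases h with h | h | h | h
  exacts [absurd h (hB.2 _ _), absurd h (hB.1 _ _), absurd h (hB.1 _ _), h]

theorem isBG.arc_of_mConnecting_empty {B : MixedGraph V} (hB : B.isBG) {p : List V}
    (h : B.mConnecting ∅ i k p) : B.arc i k := by
  obtain ⟨⟨-, hch⟩, hlen, hhead, hlast, hok⟩ := h
  match p, hch, hlen, hhead, hlast, hok with
  | [_, _], hch, _, hhead, hlast, _ =>
    obtain ⟨rfl, rfl⟩ := And.intro (Option.some_injective _ hhead).symm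
      (Option.some_injective _ hlast).symm
    exact hB.arc_of_adj (List.isChain_pair.mp hch)
  | a :: b :: c :: _, hch, _, _, _, hok =>
    have hcol : B.collider a b c :=
      ⟨Or.inr (hB.arc_of_adj (List.isChain_cons_cons.mp hch).1),
        Or.inr (B.arc_symm _ _ (hB.arc_of_adj (List.isChain_cons_cons.mp hch.tail).1))⟩
    obtain h | ⟨_, h, _⟩ := hok.1.1 hcol <;> exact h.elim

theorem isDAG.not_exists_unshieldedNonCollision_of_markovEquiv (hG : G.isDAG)
    {B : MixedGraph V} (hB : B.isBG) (hGB : G.markovEquiv B) :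
    ¬ ∃ i j k, G.unshieldedNonCollision i j k := by
  rintro ⟨i, j, k, hij, hjk, hik, hnadj, hnc⟩
  have hdisj : Disjoint ({i} : Set V) {k} := Set.disjoint_singleton.mpr hik
  have hGconn : ¬ G.mSep {i} {k} ∅ := fun h =>
    h ⟨i, k, [i, j, k], rfl, rfl, mConnecting_triple hij hjk hik
      ⟨fun hcol => absurd (hG.collider_iff.mp hcol) hnc, fun _ => Set.notMem_empty j⟩⟩
  obtain ⟨_, _, p, hi, hk, hp⟩ :=
    not_not.mp (mt (hGB _ _ _ hdisj (by simp) (by simp)).mpr hGconn)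
  rw [Set.mem_singleton_iff.mp hi, Set.mem_singleton_iff.mp hk] at hp
  refine (hGB _ _ _ hdisj (Set.disjoint_singleton_left.mpr fun h => h.1 rfl)
    (Set.disjoint_singleton_left.mpr fun h => h.2.1 rfl)).mp (hG.mSep_ancestors hik hnadj)
    ⟨i, k, [i, k], rfl, rfl, mConnecting_pair ?_⟩
  exact Or.inr (Or.inr (Or.inr (hB.arc_of_mConnecting_empty hp)))

end MixedGraph

theorem dag_equiv_some_bg_iff_general {V : Type*} (G : MixedGraph V)
    (hG : G.isDAG) :
    (∃ B : MixedGraph V, B.isBG ∧ G.markovEquiv B) ↔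
      ¬ ∃ i j k, G.unshieldedNonCollision i j k :=
  ⟨fun ⟨_, hB, hGB⟩ => hG.not_exists_unshieldedNonCollision_of_markovEquiv hB hGB,
    fun hH => ⟨G.skeletonBG, MixedGraph.skeletonBG_isBG,
      MixedGraph.markovEquiv_skeletonBG hG hH⟩⟩

/-- A DAG is Markov equivalent to some bidirected graph iff it contains no
unshielded non-collision V-configuration. -/
theorem dag_equiv_some_bg_iff {V : Type*} [Fintype V] (G : MixedGraph V)
    (hG : G.isDAG) :
    (∃ B : MixedGraph V, B.isBG ∧ G.markovEquiv B) ↔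
      ¬ ∃ i j k, G.unshieldedNonCollision i j k :=
  dag_equiv_some_bg_iff_general G hG
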